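/- The sequence a_n = 2^{−2n−3}·(4n+3)·C_n, where C_n is the n-th Catalan number, satisfies √n·a_n → 1/(2√π) as n → ∞; that is, a_n converges to zero as a power law proportional to n^{−1/2}. -/

import Mathlib

/-!
Stirling's formula gives `centralBinom n / 4 ^ n ~ 1 / √(π n)`; since
`C_n = centralBinom n / (n + 1)`, the block probability is
`(4n + 3) / (8(n + 1)) · centralBinom n / 4 ^ n`, and the rational prefactor tends to `1/2`.
-/

open Filter Real Nat Topology

theorem sqrt_mul_centralBinom_div_four_pow_eq {n : ℕ} (hn : n ≠ 0) :
    √n * centralBinom n / 4 ^ n = Stirling.stirlingSeq (2 * n) / Stirling.stirlingSeq n ^ 2 := by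
  have hfact : ((2 * n)! : ℝ) = centralBinom n * n ! * n ! := by
    rw [centralBinom, ← Nat.choose_mul_factorial_mul_factorial (by omega : n ≤ 2 * n),
      two_mul, Nat.add_sub_cancel]
    push_cast
    ring
  have hsqrt : √(2 * (2 * n : ℕ) : ℝ) = 2 * √n := by
    rw [Nat.cast_mul, ← mul_assoc, sqrt_mul (by norm_num)]
    norm_num [show √4 = 2 by rw [show (4 : ℝ) = 2 ^ 2 by norm_num, sqrt_sq (by norm_num)]]
  have hpow : ((2 * n : ℕ) / exp 1 : ℝ) ^ (2 * n) = 4 ^ n * ((n / exp 1) ^ n) ^ 2 := by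
    rw [Nat.cast_mul, Nat.cast_ofNat, mul_div_assoc, mul_pow, pow_mul (2 : ℝ) 2 n]
    norm_num
    ring
  simp only [Stirling.stirlingSeq, hfact, hsqrt, hpow, div_pow, mul_pow,
    sq_sqrt (by positivity : (0 : ℝ) ≤ 2 * n)]
  field_simp
  rw [sq_sqrt (by positivity)]
  ring

theorem tendsto_sqrt_mul_centralBinom_div_four_pow :
    Tendsto (fun n : ℕ => √n * centralBinom n / 4 ^ n) atTop (𝓝 (1 / √π)) := by
  have hstirling_two_mul : Tendsto (fun n : ℕ => Stirling.stirlingSeq (2 * n)) atTop (𝓝 √π) :=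
    Stirling.tendsto_stirlingSeq_sqrt_pi.comp (tendsto_id.const_mul_atTop' two_pos)
  have hstirling_sq : Tendsto (fun n : ℕ => Stirling.stirlingSeq n ^ 2) atTop (𝓝 π) := by
    simpa [sq_sqrt pi_pos.le] using Stirling.tendsto_stirlingSeq_sqrt_pi.pow 2
  rw [← sqrt_div_self']
  refine (hstirling_two_mul.div hstirling_sq pi_ne_zero).congr' ?_
  filter_upwards [eventually_ne_atTop 0] with n hn
  exact (sqrt_mul_centralBinom_div_four_pow_eq hn).symm

theorem four_mul_add_three_mul_catalan_div_two_pow (n : ℕ) :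
    (4 * n + 3) * (catalan n : ℝ) / 2 ^ (2 * n + 3) =
      (3 + 4 * n) / (8 + 8 * n) * (centralBinom n / 4 ^ n) := by
  have hcatalan : ((n : ℝ) + 1) * catalan n = centralBinom n := by
    exact_mod_cast succ_mul_catalan_eq_centralBinom n
  rw [← hcatalan, pow_add, pow_mul]
  field_simp
  ring

theorem P000_power_law_decay :
    Tendsto
      (fun n : ℕ =>
        Real.sqrt n *
          ((4 * n + 3) * (catalan n : ℝ) / 2 ^ (2 * n + 3)))
      atTop (nhds (1 / (2 * Real.sqrt Real.pi))) := by
  have hprefactor : Tendsto (fun n : ℕ => (3 + 4 * n : ℝ) / (8 + 8 * n)) atTop (𝓝 (4 / 8)) :=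
    tendsto_add_mul_div_add_mul_atTop_nhds 3 8 4 (by norm_num)
  have hlimit : (4 / 8 : ℝ) * (1 / √π) = 1 / (2 * √π) := by ring
  rw [← hlimit]
  refine (hprefactor.mul tendsto_sqrt_mul_centralBinom_div_four_pow).congr fun n => ?_
  rw [four_mul_add_three_mul_catalan_div_two_pow, mul_div_assoc, mul_left_comm]
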